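/- Let q = e^{2πi/r} with r ≥ 3 odd, so r' = r. Define the left integral λ_α on u_ᾱ by λ_α(E^ℓ F^{(m)} T_{2n+α}^0) = δ_{ℓ,r−1} δ_{m,r−1} q^{(2n+α)(1−r)}/√r on the basis {E^ℓ F^{(m)} T_{2n+α}^0}. Then λ_α(F^ℓ E^m K^n) = δ_{ℓ,r−1} δ_{m,r−1} χ_{(r/2)ℤ}(n+1) · (√r [r−1]!/{1}^{r−1}) · q^{(n+1−r)α}, where χ_A is the indicator function of A ⊂ ℂ. -/

import Mathlib

/-!
Commuting `F` past `E` with `[E, F] = (K - K⁻¹)/{1}` shows that `F^ℓ E^m ≡ E^m F^ℓ` modulo the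
span of the monomials `E^a F^b K^c` with `a < m`, `b < ℓ`, and `λ_α` kills all of these since
`a < r - 1`. On `E^m F^ℓ K^n`, expand `K^n = Σ_j q^{(2j+α)n} T_{2j+α}^0`, replace `F^ℓ` by
`([ℓ]!/{1}^ℓ) F^{(ℓ)}` and apply the defining values of `λ_α`: what is left is the character sum
`Σ_j q^{2j(n+1-r)}`, equal to `r` or `0` according as `r ∣ n + 1`, which for odd `r` means
`n + 1 ∈ (r/2)ℤ`.
-/

noncomputable section

/-- `q^z = e^{2πiz/r}` for `q = e^{2πi/r}`. -/
def qp (r : ℕ) (z : ℂ) : ℂ := Complex.exp (2 * Real.pi * Complex.I * z / r)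

/-- `{z} = q^z - q^{-z}`. -/
def qbr (r : ℕ) (z : ℂ) : ℂ := qp r z - qp r (-z)

/-- the quantum integer `[k] = {k}/{1}`. -/
def qint (r k : ℕ) : ℂ := qbr r k / qbr r 1

/-- the quantum factorial `[k]!`. -/
def qfact (r k : ℕ) : ℂ := ∏ j ∈ Finset.range k, qint r (j + 1)

/-- the Gaussian binomial `[n choose k]`. -/
def qbinom (r n k : ℕ) : ℂ := qfact r n / (qfact r k * qfact r (n - k))

/-- the falling product `{z;k} = Π_{j=0}^{k-1} {z-j}`. -/
def qbrfall (r : ℕ) (z : ℂ) (k : ℕ) : ℂ := ∏ j ∈ Finset.range k, qbr r (z - j)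

/-- the element `T_γ^β = (1/r') Σ_{b=0}^{r'-1} q^{-γb} K^{b+β}`. -/
def Tel {A : Type*} [Ring A] [Algebra ℂ A] (r r' : ℕ) (K : ℂ → A) (γ β : ℂ) : A :=
  (r' : ℂ)⁻¹ • ∑ b ∈ Finset.range r', qp r (-(γ * b)) • K (b + β)

/-- the divided power `F^{(a)} = ({1}^a/[a]!) F^a`. -/
def Fdiv {A : Type*} [Ring A] [Algebra ℂ A] (r : ℕ) (F : A) (a : ℕ) : A :=
  ((qbr r 1) ^ a / qfact r a) • F ^ a

open scoped Classical

open Finset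

section Scalars

lemma qp_add (r : ℕ) (a b : ℂ) : qp r (a + b) = qp r a * qp r b := by
  simp only [qp, ← Complex.exp_add]; congr 1; ring

lemma qp_neg (r : ℕ) (z : ℂ) : qp r (-z) = (qp r z)⁻¹ := by
  simp only [qp, ← Complex.exp_neg]; congr 1; ring

lemma qp_natCast_mul (r k : ℕ) (z : ℂ) : qp r (k * z) = qp r z ^ k := by
  simp only [qp, ← Complex.exp_nat_mul]; congr 1; ring

@[simp] lemma qp_zero (r : ℕ) : qp r 0 = 1 := by simp [qp]

lemma qp_ne_zero (r : ℕ) (z : ℂ) : qp r z ≠ 0 := Complex.exp_ne_zero _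

lemma qp_intCast_eq_one_iff {r : ℕ} (hr : r ≠ 0) (d : ℤ) : qp r d = 1 ↔ (r : ℤ) ∣ d := by
  rw [qp, show 2 * Real.pi * Complex.I * d / r = d * (2 * Real.pi * Complex.I / r) by ring,
    Complex.exp_int_mul, (Complex.isPrimitiveRoot_exp r hr).zpow_eq_one_iff_dvd]

lemma Odd.intCast_dvd_of_dvd_two_mul {r : ℕ} (hodd : Odd r) {d : ℤ} (h : (r : ℤ) ∣ 2 * d) :
    (r : ℤ) ∣ d :=
  (Nat.isCoprime_iff_coprime.mpr hodd.coprime_two_right).dvd_of_dvd_mul_left h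

lemma qp_two_mul_intCast_eq_one_iff {r : ℕ} (hodd : Odd r) (d : ℤ) :
    qp r (2 * d) = 1 ↔ (r : ℤ) ∣ d := by
  rw [show (2 : ℂ) * d = ((2 * d : ℤ) : ℂ) by push_cast; rfl,
    qp_intCast_eq_one_iff hodd.pos.ne']
  exact ⟨hodd.intCast_dvd_of_dvd_two_mul, fun h => h.mul_left 2⟩

/-- For odd `r`, `q²` is again a primitive `r`-th root of unity. -/
lemma sum_qp_two_mul_add_mul {r : ℕ} (hodd : Odd r) (γ : ℂ) (d : ℤ) :
    ∑ j ∈ range r, qp r ((2 * j + γ) * d) = if (r : ℤ) ∣ d then r * qp r (γ * d) else 0 := by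
  have hterm : ∀ j : ℕ, qp r ((2 * j + γ) * d) = qp r (γ * d) * qp r (2 * d) ^ j := by
    intro j
    rw [← qp_natCast_mul, ← qp_add]; congr 1; ring
  simp only [hterm, ← mul_sum]
  split_ifs with hd
  · rw [(qp_two_mul_intCast_eq_one_iff hodd d).mpr hd]
    simp [mul_comm]
  · have hpow : qp r (2 * d) ^ r = 1 := by
      rw [← qp_natCast_mul, show (r : ℂ) * (2 * d) = ((r * (2 * d) : ℤ) : ℂ) by push_cast; rfl,
        qp_intCast_eq_one_iff hodd.pos.ne']
      exact dvd_mul_right _ _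
    rw [geom_sum_eq (mt (qp_two_mul_intCast_eq_one_iff hodd d).mp hd), hpow, sub_self,
      zero_div, mul_zero]

lemma qbr_natCast_ne_zero {r j : ℕ} (hodd : Odd r) (h0 : 0 < j) (hj : j < r) :
    qbr r j ≠ 0 := by
  have hfactor : qbr r j = qp r (-j) * (qp r (2 * j) - 1) := by
    rw [qbr, mul_sub, mul_one, ← qp_add]; congr 2; ring
  rw [hfactor]
  refine mul_ne_zero (qp_ne_zero _ _) (sub_ne_zero.mpr fun h => ?_)
  have hdvd := (qp_two_mul_intCast_eq_one_iff hodd j).mp (by exact_mod_cast h)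
  exact absurd (Nat.le_of_dvd h0 (Int.natCast_dvd_natCast.mp hdvd)) (by omega)

lemma qfact_ne_zero {r k : ℕ} (hodd : Odd r) (hk : k < r) : qfact r k ≠ 0 := by
  refine prod_ne_zero_iff.mpr fun j hj => div_ne_zero ?_ ?_
  · exact qbr_natCast_ne_zero hodd j.succ_pos (by simp at hj; omega)
  · exact_mod_cast qbr_natCast_ne_zero hodd one_pos (by simp at hj; omega)

lemma Odd.intCast_dvd_iff_exists_eq_mul_div_two {r : ℕ} (hodd : Odd r) (d : ℤ) :
    (r : ℤ) ∣ d ↔ ∃ j : ℤ, (d : ℂ) = j * r / 2 := by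
  constructor
  · rintro ⟨k, rfl⟩
    exact ⟨2 * k, by push_cast; ring⟩
  · rintro ⟨j, hj⟩
    refine hodd.intCast_dvd_of_dvd_two_mul ⟨j, ?_⟩
    exact_mod_cast (show (2 * d : ℂ) = r * j by rw [hj]; ring)

end Scalars

section Algebra

variable {A : Type*} [Ring A] [Algebra ℂ A] {r : ℕ} {E F : A} {K : ℂ → A} {α : ℂ}

lemma K_add_intCast_mul (hKadd : ∀ a b : ℂ, K a * K b = K (a + b))
    (hKq : K ((r : ℂ) / 2) = qp r (α * r / 2) • (1 : A)) (t : ℤ) (x : ℂ) :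
    K (x + t * r) = qp r (α * r * t) • K x := by
  have hKr : K r = qp r (α * r) • 1 := by
    rw [← add_halves (r : ℂ), ← hKadd, hKq, smul_mul_smul_comm, one_mul, ← qp_add]
    congr 2; ring
  have hsucc : ∀ x : ℂ, K (x + r) = qp r (α * r) • K x := fun x => by
    rw [← hKadd, hKr, mul_smul_comm, mul_one]
  induction t using Int.induction_on generalizing x with
  | zero => simp
  | succ t ih =>
    rw [show x + ((t + 1 : ℤ) : ℂ) * r = x + (t : ℤ) * r + r by push_cast; ring, hsucc, ih,
      smul_smul, ← qp_add]
    congr 2; push_cast; ring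
  | pred t ih =>
    have h := hsucc (x + ((-t - 1 : ℤ) : ℂ) * r)
    rw [show x + ((-t - 1 : ℤ) : ℂ) * r + r = x + ((-t : ℤ) : ℂ) * r by push_cast; ring, ih] at h
    rw [← inv_smul_smul₀ (qp_ne_zero r (α * r)) (K _), ← h, smul_smul, ← qp_neg, ← qp_add]
    congr 2; push_cast; ring

/-- Fourier inversion on `ℤ/r`, the `T_{2j+α}^0` being the spectral idempotents of `K`; the
reduction of `c` modulo `r` uses `K^r = q^{αr}`. -/
lemma K_intCast_eq_sum_Tel (hodd : Odd r) (hKadd : ∀ a b : ℂ, K a * K b = K (a + b))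
    (hKq : K ((r : ℂ) / 2) = qp r (α * r / 2) • (1 : A)) (c : ℤ) :
    K c = ∑ j ∈ range r, qp r ((2 * j + α) * c) • Tel r r K (2 * j + α) 0 := by
  have hr : (0 : ℤ) < r := by exact_mod_cast hodd.pos
  have hexpand : ∑ j ∈ range r, qp r ((2 * j + α) * c) • Tel r r K (2 * j + α) 0
      = ∑ b ∈ range r, ((r : ℂ)⁻¹ * ∑ j ∈ range r, qp r ((2 * j + α) * ((c - b : ℤ) : ℂ))) •
          K b := by
    simp only [Tel, smul_sum, smul_smul, add_zero, mul_sum, sum_smul]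
    rw [sum_comm]
    refine sum_congr rfl fun b _ => sum_congr rfl fun j _ => ?_
    rw [mul_left_comm, ← qp_add]
    congr 3; push_cast; ring
  set b₀ := (c % r).toNat
  have hb₀ : (b₀ : ℤ) = c % r := Int.toNat_of_nonneg (Int.emod_nonneg c hr.ne')
  have hcollapse : ∀ b ∈ range r,
      ((r : ℂ)⁻¹ * ∑ j ∈ range r, qp r ((2 * j + α) * ((c - b : ℤ) : ℂ))) • K b
        = if b = b₀ then K c else 0 := by
    intro b hb
    have hbr : (b : ℤ) < r := by simp at hb; omega
    have hdvd : (r : ℤ) ∣ c - b ↔ b = b₀ := by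
      rw [← Int.modEq_iff_dvd, Int.ModEq, Int.emod_eq_of_lt (by positivity) hbr, ← hb₀]
      omega
    rw [sum_qp_two_mul_add_mul hodd, apply_ite (fun z => (r : ℂ)⁻¹ * z), mul_zero,
      inv_mul_cancel_left₀ (by exact_mod_cast hr.ne'), ite_smul, zero_smul]
    by_cases hbb : b = b₀
    · obtain ⟨t, ht⟩ := hdvd.mpr hbb
      rw [if_pos (hdvd.mpr hbb), if_pos hbb, ht,
        show (c : ℂ) = b + (t : ℤ) * r by push_cast [eq_add_of_sub_eq' ht]; ring,
        K_add_intCast_mul hKadd hKq]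
      congr 2; push_cast; ring
    · rw [if_neg (mt hdvd.mp hbb), if_neg hbb]
  rw [hexpand, sum_congr rfl hcollapse, sum_ite_eq', if_pos]
  have := Int.emod_lt_of_pos c hr
  simp only [mem_range]; omega

lemma F_pow_eq_smul_Fdiv (hodd : Odd r) {b : ℕ} (hb : b < r) :
    F ^ b = (qfact r b / qbr r 1 ^ b) • Fdiv r F b := by
  have hpow : qbr r 1 ^ b ≠ 0 := by
    rcases b.eq_zero_or_pos with rfl | hb0
    · simp
    · exact pow_ne_zero _ (by exact_mod_cast qbr_natCast_ne_zero hodd one_pos (by omega))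
  rw [Fdiv, smul_smul, div_mul_div_cancel₀ hpow, div_self (qfact_ne_zero hodd hb), one_smul]

lemma lam_E_pow_F_pow_Tel (hodd : Odd r) (lam : A →ₗ[ℂ] ℂ)
    (hlam : ∀ ℓ m n : ℕ, ℓ < r → m < r → n < r →
      lam (E ^ ℓ * Fdiv r F m * Tel r r K (2 * n + α) 0) =
        if ℓ = r - 1 ∧ m = r - 1 then
          qp r ((2 * (n : ℂ) + α) * (1 - r)) / ((Real.sqrt r : ℝ) : ℂ) else 0)
    {a b j : ℕ} (ha : a < r) (hb : b < r) (hj : j < r) :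
    lam (E ^ a * F ^ b * Tel r r K (2 * j + α) 0) =
      if a = r - 1 ∧ b = r - 1 then
        qfact r (r - 1) / qbr r 1 ^ (r - 1) / ((Real.sqrt r : ℝ) : ℂ) *
          qp r ((2 * (j : ℂ) + α) * (1 - r))
      else 0 := by
  rw [F_pow_eq_smul_Fdiv hodd hb, mul_smul_comm, smul_mul_assoc, map_smul, hlam a b j ha hb hj,
    smul_eq_mul]
  split_ifs with hab
  · rw [hab.2, mul_div_assoc']; ring
  · rw [mul_zero]

lemma lam_E_pow_F_pow_K (hodd : Odd r) (hKadd : ∀ a b : ℂ, K a * K b = K (a + b))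
    (hKq : K ((r : ℂ) / 2) = qp r (α * r / 2) • (1 : A)) (lam : A →ₗ[ℂ] ℂ)
    (hlam : ∀ ℓ m n : ℕ, ℓ < r → m < r → n < r →
      lam (E ^ ℓ * Fdiv r F m * Tel r r K (2 * n + α) 0) =
        if ℓ = r - 1 ∧ m = r - 1 then
          qp r ((2 * (n : ℂ) + α) * (1 - r)) / ((Real.sqrt r : ℝ) : ℂ) else 0)
    {a b : ℕ} (ha : a < r) (hb : b < r) (c : ℤ) :
    lam (E ^ a * F ^ b * K c) =
      if a = r - 1 ∧ b = r - 1 ∧ (r : ℤ) ∣ c + 1 then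
        (((Real.sqrt r : ℝ) : ℂ) * qfact r (r - 1) / qbr r 1 ^ (r - 1)) *
          qp r (((c : ℂ) + 1 - r) * α)
      else 0 := by
  rw [K_intCast_eq_sum_Tel hodd hKadd hKq c, mul_sum, map_sum]
  simp_rw [mul_smul_comm, map_smul, smul_eq_mul]
  rw [sum_congr rfl fun j hj => by rw [lam_E_pow_F_pow_Tel hodd lam hlam ha hb (mem_range.mp hj)]]
  by_cases hab : a = r - 1 ∧ b = r - 1
  · obtain ⟨rfl, rfl⟩ := hab
    set C := qfact r (r - 1) / qbr r 1 ^ (r - 1) / ((Real.sqrt r : ℝ) : ℂ) with hC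
    have hterm : ∀ j : ℕ, qp r ((2 * j + α) * c) * (C * qp r ((2 * j + α) * (1 - r))) =
        C * qp r ((2 * j + α) * ((c + 1 - r : ℤ) : ℂ)) := fun j => by
      rw [show (2 * j + α) * ((c + 1 - r : ℤ) : ℂ) = (2 * j + α) * c + (2 * j + α) * (1 - r) by
        push_cast; ring, qp_add]
      ring
    simp only [and_self, true_and, ↓reduceIte, hterm, ← mul_sum, sum_qp_two_mul_add_mul hodd,
      dvd_sub_self_right]
    split_ifs
    · have hsqrt : ((Real.sqrt r : ℝ) : ℂ) ^ 2 = r := by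
        rw [← Complex.ofReal_pow, Real.sq_sqrt (Nat.cast_nonneg r), Complex.ofReal_natCast]
      have hsqrt_ne : ((Real.sqrt r : ℝ) : ℂ) ≠ 0 := by
        exact_mod_cast (Real.sqrt_pos.mpr (by exact_mod_cast hodd.pos)).ne'
      rw [hC]
      field_simp
      push_cast
      rw [hsqrt]
    · rw [mul_zero]
  · simp only [if_neg hab, mul_zero, sum_const_zero]
    rw [if_neg (by tauto)]

lemma K_mul_F_pow (hKF : ∀ a : ℂ, K a * F = qp r (-(2 * a)) • (F * K a)) (c : ℂ) (b : ℕ) :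
    K c * F ^ b = qp r (-(2 * c * b)) • (F ^ b * K c) := by
  induction b with
  | zero => simp
  | succ b ih =>
    rw [pow_succ, ← mul_assoc, ih, smul_mul_assoc, mul_assoc (F ^ b), hKF, mul_smul_comm, smul_smul,
      ← qp_add, ← mul_assoc]
    congr 2; push_cast; ring

variable (E F K) in
def pbwSpan (m ℓ : ℕ) : Submodule ℂ A :=
  Submodule.span ℂ {x | ∃ a < m, ∃ b < ℓ, ∃ c : ℤ, x = E ^ a * F ^ b * K c}

lemma E_pow_F_pow_K_mem_pbwSpan {m ℓ a b : ℕ} (ha : a < m) (hb : b < ℓ) (c : ℤ) :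
    E ^ a * F ^ b * K c ∈ pbwSpan E F K m ℓ :=
  Submodule.subset_span ⟨a, ha, b, hb, c, rfl⟩

lemma pbwSpan_mono {m m' ℓ ℓ' : ℕ} (hm : m ≤ m') (hℓ : ℓ ≤ ℓ') :
    pbwSpan E F K m ℓ ≤ pbwSpan E F K m' ℓ' :=
  Submodule.span_mono <| by
    rintro _ ⟨a, ha, b, hb, c, rfl⟩
    exact ⟨a, by omega, b, by omega, c, rfl⟩

lemma mul_K_mem_pbwSpan (hKadd : ∀ a b : ℂ, K a * K b = K (a + b)) {m ℓ : ℕ} {x : A}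
    (hx : x ∈ pbwSpan E F K m ℓ) (c : ℤ) : x * K c ∈ pbwSpan E F K m ℓ := by
  refine (Submodule.span_le (p := (pbwSpan E F K m ℓ).comap (LinearMap.mulRight ℂ (K c)))).mpr
    ?_ hx
  rintro _ ⟨a, ha, b, hb, c', rfl⟩
  simpa [mul_assoc, hKadd] using E_pow_F_pow_K_mem_pbwSpan (F := F) (K := K) ha hb (c' + c)

lemma mul_E_mem_pbwSpan (hKE : ∀ a : ℂ, K a * E = qp r (2 * a) • (E * K a)) {m : ℕ} {x : A}
    (hx : x ∈ pbwSpan E F K m 1) : x * E ∈ pbwSpan E F K (m + 1) 1 := by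
  refine (Submodule.span_le (p := (pbwSpan E F K (m + 1) 1).comap (LinearMap.mulRight ℂ E))).mpr
    ?_ hx
  rintro _ ⟨a, ha, b, hb, c, rfl⟩
  obtain rfl : b = 0 := by omega
  have h : E ^ a * F ^ 0 * K c * E = qp r (2 * c) • (E ^ (a + 1) * F ^ 0 * K c) := by
    rw [mul_assoc, hKE, mul_smul_comm, pow_zero, mul_one, mul_one, pow_succ, mul_assoc]
  simpa only [SetLike.mem_coe, Submodule.mem_comap, LinearMap.mulRight_apply, h] using
    Submodule.smul_mem _ _ (E_pow_F_pow_K_mem_pbwSpan (by omega) hb c)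

lemma mul_F_pow_mem_pbwSpan (hKF : ∀ a : ℂ, K a * F = qp r (-(2 * a)) • (F * K a)) {m : ℕ}
    {x : A} (hx : x ∈ pbwSpan E F K m 1) (b : ℕ) : x * F ^ b ∈ pbwSpan E F K m (b + 1) := by
  refine (Submodule.span_le
    (p := (pbwSpan E F K m (b + 1)).comap (LinearMap.mulRight ℂ (F ^ b)))).mpr ?_ hx
  rintro _ ⟨a, ha, b', hb', c, rfl⟩
  obtain rfl : b' = 0 := by omega
  have h : E ^ a * F ^ 0 * K c * F ^ b = qp r (-(2 * c * b)) • (E ^ a * F ^ b * K c) := by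
    rw [pow_zero, mul_one, mul_assoc, K_mul_F_pow hKF, mul_smul_comm, ← mul_assoc]
  simpa only [SetLike.mem_coe, Submodule.mem_comap, LinearMap.mulRight_apply, h] using
    Submodule.smul_mem _ _ (E_pow_F_pow_K_mem_pbwSpan ha b.lt_succ_self c)

lemma F_mul_E_pow_sub_mem_pbwSpan (hKE : ∀ a : ℂ, K a * E = qp r (2 * a) • (E * K a))
    (hEF : E * F - F * E = (qbr r 1)⁻¹ • (K 1 - K (-1))) (m : ℕ) :
    F * E ^ m - E ^ m * F ∈ pbwSpan E F K m 1 := by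
  induction m with
  | zero => simp
  | succ m ih =>
    have hsplit : F * E ^ (m + 1) - E ^ (m + 1) * F =
        (F * E ^ m - E ^ m * F) * E + (qbr r 1)⁻¹ • (E ^ m * F ^ 0 * K (-1 : ℤ) -
          E ^ m * F ^ 0 * K (1 : ℤ)) := by
      have hFE : F * E - E * F = (qbr r 1)⁻¹ • (K (-1) - K 1) := by
        rw [← neg_sub, hEF, ← smul_neg, neg_sub]
      rw [pow_zero, mul_one, Int.cast_neg, Int.cast_one, ← mul_sub, ← mul_smul_comm,
        ← hFE, pow_succ]
      noncomm_ring
    rw [hsplit]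
    exact add_mem (mul_E_mem_pbwSpan hKE ih) (Submodule.smul_mem _ _ (sub_mem
      (E_pow_F_pow_K_mem_pbwSpan m.lt_succ_self one_pos _)
      (E_pow_F_pow_K_mem_pbwSpan m.lt_succ_self one_pos _)))

lemma F_mul_mem_pbwSpan (hKadd : ∀ a b : ℂ, K a * K b = K (a + b))
    (hKE : ∀ a : ℂ, K a * E = qp r (2 * a) • (E * K a))
    (hKF : ∀ a : ℂ, K a * F = qp r (-(2 * a)) • (F * K a))
    (hEF : E * F - F * E = (qbr r 1)⁻¹ • (K 1 - K (-1))) {m ℓ : ℕ} {x : A}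
    (hx : x ∈ pbwSpan E F K m ℓ) : F * x ∈ pbwSpan E F K m (ℓ + 1) := by
  refine (Submodule.span_le
    (p := (pbwSpan E F K m (ℓ + 1)).comap (LinearMap.mulLeft ℂ F))).mpr ?_ hx
  rintro _ ⟨a, ha, b, hb, c, rfl⟩
  have hsplit : F * (E ^ a * F ^ b * K c) =
      E ^ a * F ^ (b + 1) * K c + (F * E ^ a - E ^ a * F) * F ^ b * K c := by
    rw [pow_succ']; noncomm_ring
  rw [SetLike.mem_coe, Submodule.mem_comap, LinearMap.mulLeft_apply, hsplit]
  refine add_mem (E_pow_F_pow_K_mem_pbwSpan ha (by omega) c) (mul_K_mem_pbwSpan hKadd ?_ c)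
  exact pbwSpan_mono ha.le (by omega)
    (mul_F_pow_mem_pbwSpan hKF (F_mul_E_pow_sub_mem_pbwSpan hKE hEF a) b)

lemma F_pow_mul_E_pow_sub_mem_pbwSpan (hKadd : ∀ a b : ℂ, K a * K b = K (a + b))
    (hKE : ∀ a : ℂ, K a * E = qp r (2 * a) • (E * K a))
    (hKF : ∀ a : ℂ, K a * F = qp r (-(2 * a)) • (F * K a))
    (hEF : E * F - F * E = (qbr r 1)⁻¹ • (K 1 - K (-1))) (ℓ m : ℕ) :
    F ^ ℓ * E ^ m - E ^ m * F ^ ℓ ∈ pbwSpan E F K m ℓ := by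
  induction ℓ with
  | zero => simp
  | succ ℓ ih =>
    have hsplit : F ^ (ℓ + 1) * E ^ m - E ^ m * F ^ (ℓ + 1) =
        F * (F ^ ℓ * E ^ m - E ^ m * F ^ ℓ) + (F * E ^ m - E ^ m * F) * F ^ ℓ := by
      rw [pow_succ']; noncomm_ring
    rw [hsplit]
    exact add_mem (F_mul_mem_pbwSpan hKadd hKE hKF hEF ih)
      (mul_F_pow_mem_pbwSpan hKF (F_mul_E_pow_sub_mem_pbwSpan hKE hEF m) ℓ)

end Algebra

theorem integral_sl2_general {A : Type*} [Ring A] [Algebra ℂ A] (r : ℕ)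
    (hodd : Odd r) (E F : A) (K : ℂ → A)
    (hKadd : ∀ a b : ℂ, K a * K b = K (a + b))
    (hKE : ∀ a : ℂ, K a * E = qp r (2 * a) • (E * K a))
    (hKF : ∀ a : ℂ, K a * F = qp r (-(2 * a)) • (F * K a))
    (hEF : E * F - F * E = (qbr r 1)⁻¹ • (K 1 - K (-1)))
    (α : ℂ)
    (hKq : K ((r : ℂ) / 2) = qp r (α * r / 2) • (1 : A))
    (lam : A →ₗ[ℂ] ℂ)
    (hlam : ∀ ℓ m n : ℕ, ℓ < r → m < r → n < r →
      lam (E ^ ℓ * Fdiv r F m * Tel r r K (2 * n + α) 0) =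
        if ℓ = r - 1 ∧ m = r - 1 then
          qp r ((2 * (n : ℂ) + α) * (1 - r)) / ((Real.sqrt r : ℝ) : ℂ) else 0) :
    ∀ ℓ m n : ℕ, ℓ < r → m < r → n < r →
      lam (F ^ ℓ * E ^ m * K n) =
        if ℓ = r - 1 ∧ m = r - 1 ∧ (∃ j : ℤ, ((n : ℂ) + 1) = j * r / 2) then
          (((Real.sqrt r : ℝ) : ℂ) * qfact r (r - 1) / (qbr r 1) ^ (r - 1)) *
            qp r (((n : ℂ) + 1 - r) * α)
        else 0 := by
  intro ℓ m n hℓ hm _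
  have hlam_pbw : pbwSpan E F K m ℓ ≤ LinearMap.ker lam := Submodule.span_le.mpr <| by
    rintro _ ⟨a, ha, b, hb, c, rfl⟩
    rw [SetLike.mem_coe, LinearMap.mem_ker,
      lam_E_pow_F_pow_K hodd hKadd hKq lam hlam (ha.trans hm) (hb.trans hℓ), if_neg (by omega)]
  have hcomm := mul_K_mem_pbwSpan hKadd
    (F_pow_mul_E_pow_sub_mem_pbwSpan hKadd hKE hKF hEF ℓ m) n
  calc lam (F ^ ℓ * E ^ m * K n)
      = lam (E ^ m * F ^ ℓ * K (n : ℤ)) + lam ((F ^ ℓ * E ^ m - E ^ m * F ^ ℓ) * K (n : ℤ)) := by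
        rw [← map_add, Int.cast_natCast]; noncomm_ring
    _ = lam (E ^ m * F ^ ℓ * K (n : ℤ)) := by rw [LinearMap.mem_ker.mp (hlam_pbw hcomm), add_zero]
    _ = _ := by
      have hdvd := hodd.intCast_dvd_iff_exists_eq_mul_div_two (n + 1)
      push_cast at hdvd
      rw [lam_E_pow_F_pow_K hodd hKadd hKq lam hlam hm hℓ, Int.cast_natCast]
      exact if_congr (by rw [hdvd, and_left_comm]) rfl rfl

/-- For `r ≥ 3` odd (so `r' = r`), the left integral `λ_α` of `u_ᾱ`, defined on the basis
by `λ_α(E^ℓ F^{(m)} T_{2n+α}^0) = δ_{ℓ,r-1} δ_{m,r-1} q^{(2n+α)(1-r)}/√r`, satisfies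
`λ_α(F^ℓ E^m K^n) = δ_{ℓ,r-1} δ_{m,r-1} χ_{(r/2)ℤ}(n+1) (√r [r-1]!/{1}^{r-1})
q^{(n+1-r)α}`. -/
theorem integral_sl2 {A : Type*} [Ring A] [Algebra ℂ A] (r : ℕ) (hr : 3 ≤ r)
    (hodd : Odd r) (E F : A) (K : ℂ → A)
    (hKadd : ∀ a b : ℂ, K a * K b = K (a + b)) (hK0 : K 0 = 1)
    (hKE : ∀ a : ℂ, K a * E = qp r (2 * a) • (E * K a))
    (hKF : ∀ a : ℂ, K a * F = qp r (-(2 * a)) • (F * K a))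
    (hEF : E * F - F * E = (qbr r 1)⁻¹ • (K 1 - K (-1)))
    (hEr : E ^ r = 0) (hFr : F ^ r = 0)
    (α : ℂ)
    (hKq : K ((r : ℂ) / 2) = qp r (α * r / 2) • (1 : A))
    (lam : A →ₗ[ℂ] ℂ)
    (hlam : ∀ ℓ m n : ℕ, ℓ < r → m < r → n < r →
      lam (E ^ ℓ * Fdiv r F m * Tel r r K (2 * n + α) 0) =
        if ℓ = r - 1 ∧ m = r - 1 then
          qp r ((2 * (n : ℂ) + α) * (1 - r)) / ((Real.sqrt r : ℝ) : ℂ) else 0) :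
    ∀ ℓ m n : ℕ, ℓ < r → m < r → n < r →
      lam (F ^ ℓ * E ^ m * K n) =
        if ℓ = r - 1 ∧ m = r - 1 ∧ (∃ j : ℤ, ((n : ℂ) + 1) = j * r / 2) then
          (((Real.sqrt r : ℝ) : ℂ) * qfact r (r - 1) / (qbr r 1) ^ (r - 1)) *
            qp r (((n : ℂ) + 1 - r) * α)
        else 0 :=
  integral_sl2_general r hodd E F K hKadd hKE hKF hEF α hKq lam hlam

end
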